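/- arXiv:math/0406525 — 2 statements merged into one kernel-verified Lean document; each statement's English description precedes it below -/
import Mathlib

section
/- Let f : ℝ → ℝ have compact support and continuous q-th derivative. Let c_m = ∫ f(x) H_m(x) φ(x) dx be its Hermite coefficients. Then the Hermite coefficients of f^{(q)} satisfy c_m^{(q)} = c_{m+q} for all m ≥ 0, and consequently ∑_{m=0}^∞ c_{m+q}^2 / m! < ∞. -/
/-!
Since `(H_m φ)' = -H_{m+1} φ`, each integration by parts moves one derivative from `f` onto the
Gaussian weight and raises the Hermite index by one; compact support kills the boundary terms.
The same identity gives `∫ H_n H_m φ = n! δ_{nm}`, so the `H_m / √(m!)` form an orthonormal family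
in `L²(γ)` for the standard Gaussian measure `γ`, and the summability is Bessel's inequality for the compactly supported continuous
function `f^{(q)}`.
-/

open MeasureTheory Polynomial

/-- Probabilists' Hermite polynomial of degree `n`, evaluated at a real `x`. -/
noncomputable def hermiteEval (n : ℕ) (x : ℝ) : ℝ := Polynomial.aeval x (Polynomial.hermite n)

/-- Standard normal density. -/
noncomputable def stdGaussPDF (x : ℝ) : ℝ := (Real.sqrt (2 * Real.pi))⁻¹ * Real.exp (-x ^ 2 / 2)

open ProbabilityTheory
open scoped Nat

theorem Polynomial.derivative_hermite_succ :
    ∀ n : ℕ, derivative (hermite (n + 1)) = ((n : ℤ[X]) + 1) * hermite n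
  | 0 => by simp
  | n + 1 => by
    rw [hermite_succ (n + 1), derivative_sub, derivative_mul, derivative_X,
      derivative_hermite_succ n, derivative_mul]
    simp only [derivative_add, derivative_natCast, derivative_one]
    push_cast
    linear_combination -((n : ℤ[X]) + 1) * hermite_succ n

lemma HasCompactSupport.iteratedDeriv {𝕜 F : Type*} [NontriviallyNormedField 𝕜]
    [NormedAddCommGroup F] [NormedSpace 𝕜 F] {f : 𝕜 → F} (hf : HasCompactSupport f) (n : ℕ) :
    HasCompactSupport (iteratedDeriv n f) :=
  (hf.iteratedFDeriv n).comp_left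
    (g := fun L : ContinuousMultilinearMap 𝕜 (fun _ : Fin n => 𝕜) F => L fun _ => 1) rfl

lemma hermiteEval_zero (x : ℝ) : hermiteEval 0 x = 1 := by simp [hermiteEval]

lemma continuous_hermiteEval (n : ℕ) : Continuous (hermiteEval n) :=
  (hermite n).continuous_aeval

lemma hasDerivAt_hermiteEval_succ (n : ℕ) (x : ℝ) :
    HasDerivAt (hermiteEval (n + 1)) ((n + 1) * hermiteEval n x) x := by
  have h := (hermite (n + 1)).hasDerivAt_aeval x
  rw [derivative_hermite_succ] at h
  simp only [map_mul, map_add, map_natCast, map_one] at h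
  exact h

lemma stdGaussPDF_eq_gaussianPDFReal : stdGaussPDF = gaussianPDFReal 0 1 := by
  ext x
  simp [stdGaussPDF, gaussianPDFReal]

lemma continuous_stdGaussPDF : Continuous stdGaussPDF := by
  unfold stdGaussPDF
  fun_prop

lemma hasDerivAt_stdGaussPDF (x : ℝ) : HasDerivAt stdGaussPDF (-x * stdGaussPDF x) x := by
  have h : HasDerivAt (fun y : ℝ => -y ^ 2 / 2) (-x) x :=
    ((hasDerivAt_pow 2 x).neg.div_const 2).congr_deriv (by norm_num; ring)
  exact (h.exp.const_mul _).congr_deriv (by simp only [stdGaussPDF]; ring)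

lemma hasDerivAt_hermiteEval_mul_stdGaussPDF (m : ℕ) (x : ℝ) :
    HasDerivAt (fun y => hermiteEval m y * stdGaussPDF y)
      (-(hermiteEval (m + 1) x * stdGaussPDF x)) x :=
  (((hermite m).hasDerivAt_aeval x).mul (hasDerivAt_stdGaussPDF x)).congr_deriv (by
    simp only [hermiteEval, hermite_succ, map_sub, map_mul, aeval_X]
    ring)

lemma integral_gaussianReal_eq_integral_mul_stdGaussPDF (g : ℝ → ℝ) :
    ∫ x, g x ∂gaussianReal 0 1 = ∫ x, g x * stdGaussPDF x := by
  simp_rw [integral_gaussianReal_eq_integral_smul one_ne_zero, stdGaussPDF_eq_gaussianPDFReal,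
    smul_eq_mul, mul_comm]

lemma integrable_gaussianReal_iff {g : ℝ → ℝ} :
    Integrable g (gaussianReal 0 1) ↔ Integrable fun x => g x * stdGaussPDF x := by
  rw [gaussianReal_of_var_ne_zero _ one_ne_zero, integrable_withDensity_iff_integrable_smul'
    (measurable_gaussianPDF 0 1) (ae_of_all _ fun _ => gaussianPDF_lt_top)]
  simp_rw [gaussianPDF, ENNReal.toReal_ofReal (gaussianPDFReal_nonneg _ _ _),
    stdGaussPDF_eq_gaussianPDFReal, smul_eq_mul, mul_comm]

lemma integrable_aeval_gaussianReal {R : Type*} [CommSemiring R] [Algebra R ℝ] (p : R[X])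
    (μ : ℝ) (v : NNReal) : Integrable (fun x => aeval x p) (gaussianReal μ v) := by
  simp_rw [aeval_eq_sum_range, Algebra.smul_def]
  refine integrable_finsetSum _ fun i _ => Integrable.const_mul ?_ _
  refine ((memLp_id_gaussianReal' i (by simp)).integrable_norm_pow').mono'
    (by fun_prop) (ae_of_all _ fun x => ?_)
  simp [norm_pow]

lemma integrable_hermiteEval_mul_hermiteEval (n m : ℕ) :
    Integrable fun x => hermiteEval n x * hermiteEval m x * stdGaussPDF x :=
  integrable_gaussianReal_iff.1 <| by
    simpa [hermiteEval] using integrable_aeval_gaussianReal (hermite n * hermite m) 0 1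

lemma integrable_hermiteEval_mul_stdGaussPDF (m : ℕ) :
    Integrable fun x => hermiteEval m x * stdGaussPDF x := by
  simpa [hermiteEval_zero] using integrable_hermiteEval_mul_hermiteEval 0 m

lemma Continuous.integrable_mul_hermiteEval_mul_stdGaussPDF {u : ℝ → ℝ} (hu : Continuous u)
    (hs : HasCompactSupport u) (m : ℕ) :
    Integrable fun x => u x * hermiteEval m x * stdGaussPDF x :=
  ((hu.mul (continuous_hermiteEval m)).mul continuous_stdGaussPDF).integrable_of_hasCompactSupport
    hs.mul_right.mul_right

lemma integral_mul_hermiteEval_succ_mul_stdGaussPDF {u u' : ℝ → ℝ}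
    (hu : ∀ x, HasDerivAt u (u' x) x) (m : ℕ)
    (h₁ : Integrable fun x => u x * hermiteEval (m + 1) x * stdGaussPDF x)
    (h₂ : Integrable fun x => u' x * hermiteEval m x * stdGaussPDF x)
    (h₃ : Integrable fun x => u x * hermiteEval m x * stdGaussPDF x) :
    ∫ x, u x * hermiteEval (m + 1) x * stdGaussPDF x =
      ∫ x, u' x * hermiteEval m x * stdGaussPDF x := by
  have h := integral_mul_deriv_eq_deriv_mul_of_integrable (fun x _ => hu x)
    (fun x _ => hasDerivAt_hermiteEval_mul_stdGaussPDF m x)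
    (by simpa only [Pi.mul_def, Pi.neg_def, mul_neg, ← mul_assoc] using h₁.neg)
    (by simpa only [Pi.mul_def, ← mul_assoc] using h₂)
    (by simpa only [Pi.mul_def, ← mul_assoc] using h₃)
  simpa only [mul_neg, integral_neg, neg_inj, ← mul_assoc] using h

lemma integral_hermiteEval_succ_mul_stdGaussPDF (m : ℕ) :
    ∫ x, hermiteEval (m + 1) x * stdGaussPDF x = 0 := by
  simpa using integral_mul_hermiteEval_succ_mul_stdGaussPDF (u := fun _ => 1) (u' := fun _ => 0)
    (fun x => hasDerivAt_const x 1) m (by simpa using integrable_hermiteEval_mul_stdGaussPDF (m + 1))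
    (by simp) (by simpa using integrable_hermiteEval_mul_stdGaussPDF m)

lemma integral_hermiteEval_mul_hermiteEval (n m : ℕ) :
    ∫ x, hermiteEval n x * hermiteEval m x * stdGaussPDF x = if n = m then (n ! : ℝ) else 0 := by
  induction n generalizing m with
  | zero =>
    cases m with
    | zero =>
      simpa [hermiteEval_zero, stdGaussPDF_eq_gaussianPDFReal] using
        integral_gaussianPDFReal_eq_one 0 one_ne_zero
    | succ m => simp [hermiteEval_zero, integral_hermiteEval_succ_mul_stdGaussPDF]
  | succ n ih =>
    cases m with
    | zero =>
      simp_rw [hermiteEval_zero, mul_one, integral_hermiteEval_succ_mul_stdGaussPDF]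
      simp
    | succ m =>
      rw [integral_mul_hermiteEval_succ_mul_stdGaussPDF (hasDerivAt_hermiteEval_succ n) m
        (integrable_hermiteEval_mul_hermiteEval _ _)
        (by simpa only [mul_assoc] using (integrable_hermiteEval_mul_hermiteEval n m).const_mul _)
        (integrable_hermiteEval_mul_hermiteEval _ _)]
      simp_rw [mul_assoc, integral_const_mul, ← mul_assoc, ih, Nat.factorial_succ, add_left_inj]
      split_ifs <;> push_cast <;> ring

lemma integral_iteratedDeriv_mul_hermiteEval_mul_stdGaussPDF {f : ℝ → ℝ} {q : ℕ}
    (hf : HasCompactSupport f) (hd : ContDiff ℝ q f) (m : ℕ) :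
    ∫ x, iteratedDeriv q f x * hermiteEval m x * stdGaussPDF x =
      ∫ x, f x * hermiteEval (m + q) x * stdGaussPDF x := by
  induction q generalizing f with
  | zero => simp
  | succ q ih =>
    obtain ⟨hdiff, -, hderiv⟩ :=
      contDiff_succ_iff_deriv.1 (by exact_mod_cast hd : ContDiff ℝ ((q : WithTop ℕ∞) + 1) f)
    rw [iteratedDeriv_succ', ih hf.deriv hderiv, ← add_assoc]
    exact (integral_mul_hermiteEval_succ_mul_stdGaussPDF (fun x => (hdiff x).hasDerivAt) _
      (hd.continuous.integrable_mul_hermiteEval_mul_stdGaussPDF hf _)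
      (hderiv.continuous.integrable_mul_hermiteEval_mul_stdGaussPDF hf.deriv _)
      (hd.continuous.integrable_mul_hermiteEval_mul_stdGaussPDF hf _)).symm

lemma MeasureTheory.MemLp.inner_toLp_toLp {α : Type*} [MeasurableSpace α] {μ : Measure α}
    {f g : α → ℝ} (hf : MemLp f 2 μ) (hg : MemLp g 2 μ) :
    inner ℝ (hf.toLp f) (hg.toLp g) = ∫ x, f x * g x ∂μ := by
  rw [L2.inner_def]
  refine integral_congr_ae ?_
  filter_upwards [hf.coeFn_toLp, hg.coeFn_toLp] with x hfx hgx
  simp [hfx, hgx, mul_comm]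

lemma memLp_hermiteEval (n : ℕ) : MemLp (hermiteEval n) 2 (gaussianReal 0 1) :=
  (memLp_two_iff_integrable_sq (continuous_hermiteEval n).aestronglyMeasurable).2 <| by
    simp only [hermiteEval, ← map_pow]
    exact integrable_aeval_gaussianReal _ 0 1

noncomputable def hermiteL2 (n : ℕ) : Lp ℝ 2 (gaussianReal 0 1) :=
  (√(n ! : ℝ))⁻¹ • (memLp_hermiteEval n).toLp

lemma inner_hermiteL2_toLp {g : ℝ → ℝ} (hg : MemLp g 2 (gaussianReal 0 1)) (n : ℕ) :
    inner ℝ (hermiteL2 n) (hg.toLp g) =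
      (√(n ! : ℝ))⁻¹ * ∫ x, g x * hermiteEval n x * stdGaussPDF x := by
  rw [hermiteL2, real_inner_smul_left, MemLp.inner_toLp_toLp,
    integral_gaussianReal_eq_integral_mul_stdGaussPDF]
  simp_rw [mul_comm (hermiteEval n _)]

lemma orthonormal_hermiteL2 : Orthonormal ℝ hermiteL2 := by
  refine orthonormal_iff_ite.2 fun m n => ?_
  rw [real_inner_comm, show hermiteL2 m = (√(m ! : ℝ))⁻¹ • (memLp_hermiteEval m).toLp from rfl,
    real_inner_smul_right, inner_hermiteL2_toLp, integral_hermiteEval_mul_hermiteEval]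
  rcases eq_or_ne m n with rfl | h
  · rw [if_pos rfl, if_pos rfl, ← mul_assoc, ← mul_inv, Real.mul_self_sqrt (by positivity),
      inv_mul_cancel₀ (by positivity)]
  · simp [h]

theorem summable_sq_integral_mul_hermiteEval_div_factorial {g : ℝ → ℝ}
    (hg : MemLp g 2 (gaussianReal 0 1)) :
    Summable fun m : ℕ => (∫ x, g x * hermiteEval m x * stdGaussPDF x) ^ 2 / m ! :=
  (orthonormal_hermiteL2.inner_products_summable (hg.toLp g)).congr fun m => by
    rw [inner_hermiteL2_toLp, Real.norm_eq_abs, sq_abs, mul_pow, inv_pow,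
      Real.sq_sqrt (by positivity), inv_mul_eq_div]

/-- For `f` of compact support with continuous `q`-th derivative, the Hermite coefficients
of `f^{(q)}` satisfy `c_m^{(q)} = c_{m+q}`, and `∑ c_{m+q}^2 / m! < ∞`. -/
theorem stmt_4 (f : ℝ → ℝ) (q : ℕ) (hsupp : HasCompactSupport f)
    (hsmooth : ContDiff ℝ (q : ℕ∞) f)
    (c : ℕ → ℝ) (hc : ∀ m, c m = ∫ x, f x * hermiteEval m x * stdGaussPDF x) :
    (∀ m : ℕ, ∫ x, iteratedDeriv q f x * hermiteEval m x * stdGaussPDF x = c (m + q)) ∧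
      Summable (fun m : ℕ => c (m + q) ^ 2 / (m.factorial : ℝ)) := by
  have hcoeff (m : ℕ) : ∫ x, iteratedDeriv q f x * hermiteEval m x * stdGaussPDF x = c (m + q) :=
    (integral_iteratedDeriv_mul_hermiteEval_mul_stdGaussPDF hsupp hsmooth m).trans (hc _).symm
  have hL2 : MemLp (iteratedDeriv q f) 2 (gaussianReal 0 1) :=
    (hsmooth.continuous_iteratedDeriv' q).memLp_of_hasCompactSupport (hsupp.iteratedDeriv q)
  exact ⟨hcoeff, by simpa only [hcoeff] using summable_sq_integral_mul_hermiteEval_div_factorial hL2⟩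
end

section
/- In the setting of pairing counts underlying the diagram formula: the number of products in the Hermite diagram expansion with exactly r pairings of components of A_i with components of A_j is bounded above by (a_0! / ∏_k a[k]!)^2 · (m + a_0)! / (r! (a_0 - r)! (a_0 - r)! (m - a_0 + r)!), for max(a_0 - m, 0) ≤ r ≤ a_0. -/
/-!
A pair `(l, t)` is determined by its pattern `i ↦ ((l i).isLeft, (t i).isLeft)` together with the
A-labels that `l` and `t` put on their `a₀` A-positions. The pattern has cells of sizes
`r, a₀ - r, a₀ - r, m - a₀ + r`. Functions `α → β` with prescribed fibre sizes `c` form one orbit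
of `Perm α`, whose stabiliser has order `∏ b, (c b)!`; so there are at most
`(m + a₀)! / (r! (a₀ - r)!² (m - a₀ + r)!)` patterns and, for each pattern, at most
`(a₀! / ∏ k, (a k)!)²` choices of labels.
-/

open Finset MulAction Nat

theorem Sum.eq_inr_of_isLeft_eq_false {β : Type*} {x : β ⊕ Unit} (h : x.isLeft = false) :
    x = Sum.inr () := by
  cases x with
  | inl => simp at h
  | inr => rfl

section FiberCount

variable {α β : Type*} [Fintype α] [DecidableEq β]

theorem mem_orbit_domMulAct_iff {f g : α → β} :
    g ∈ orbit (Equiv.Perm α)ᵈᵐᵃ f ↔ ∀ b, #{i | g i = b} = #{i | f i = b} := by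
  simp only [← Fintype.card_subtype]
  constructor
  · rintro ⟨σ, rfl⟩ b
    exact Fintype.card_congr ((DomMulAct.mk.symm σ).subtypeEquiv fun _ => Iff.rfl)
  · intro h
    let e := Equiv.ofFiberEquiv fun b => Fintype.equivOfCardEq (h b)
    exact ⟨DomMulAct.mk e, funext fun i => Equiv.ofFiberEquiv_map _ i⟩

abbrev Labeling (a : β → ℕ) (x : α → Bool) : Type _ :=
  {l : α → β ⊕ Unit // (∀ k, #{i | l i = Sum.inl k} = a k) ∧ ∀ i, (l i).isLeft = x i}

variable [DecidableEq α] [Fintype β]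

theorem card_fun_fiber_card_eq_mul_prod_factorial_le (c : β → ℕ) :
    Fintype.card {g : α → β // ∀ b, #{i | g i = b} = c b} * ∏ b, (c b)! ≤
      (Fintype.card α)! := by
  rcases isEmpty_or_nonempty {g : α → β // ∀ b, #{i | g i = b} = c b} with _ | ⟨f, hf⟩
  · simp
  refine le_of_eq ?_
  have horbit : {g : α → β // ∀ b, #{i | g i = b} = c b} ≃ orbit (Equiv.Perm α)ᵈᵐᵃ f :=
    Equiv.subtypeEquivRight fun g => by simp only [hf, mem_orbit_domMulAct_iff]
  have hstab : Nat.card (stabilizer (Equiv.Perm α)ᵈᵐᵃ f) = ∏ b, (c b)! := by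
    rw [← Nat.card_congr (Equiv.subtypeEquiv DomMulAct.mk fun _ =>
        DomMulAct.mem_stabilizer_iff.symm), Nat.card_eq_fintype_card]
    simp only [Equiv.symm_apply_apply]
    rw [DomMulAct.stabilizer_card]
    simp [Fintype.card_subtype, hf]
  rw [← Nat.card_eq_fintype_card, Nat.card_congr horbit, ← hstab, ← Nat.card_prod,
    Nat.card_congr (orbitProdStabilizerEquivGroup _ f), Nat.card_congr DomMulAct.mk.symm,
    Nat.card_perm, Nat.card_eq_fintype_card]

theorem card_labeling_mul_prod_factorial_le (a : β → ℕ) (x : α → Bool) :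
    Fintype.card (Labeling a x) * ∏ k, (a k)! ≤ (#{i | x i})! := by
  let restrict (l : Labeling a x) :
      {g : {i // x i = true} → β ⊕ Unit // ∀ b, #{i | g i = b} = Sum.elim a 0 b} := by
    refine ⟨fun i => l.1 i, ?_⟩
    rintro (k | ⟨⟩)
    · rw [Sum.elim_inl, ← l.2.1 k, ← Fintype.card_subtype, ← Fintype.card_subtype]
      refine Fintype.card_congr (Equiv.subtypeSubtypeEquivSubtype (p := fun i => x i = true)
        (q := fun i => l.1 i = Sum.inl k) fun h => ?_)
      rw [← l.2.2, h]
      rfl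
    · refine Finset.card_eq_zero.2 (Finset.filter_eq_empty_iff.2 fun i _ h => ?_)
      simpa [h, i.2] using l.2.2 i
  have hinj : Function.Injective restrict := by
    rintro ⟨l, hl⟩ ⟨l', hl'⟩ h
    refine Subtype.ext (funext fun i => ?_)
    show l i = l' i
    cases hi : x i
    · rw [Sum.eq_inr_of_isLeft_eq_false ((hl.2 i).trans hi),
        Sum.eq_inr_of_isLeft_eq_false ((hl'.2 i).trans hi)]
    · exact congrFun (congrArg Subtype.val h) ⟨i, hi⟩
  have hprod : ∏ b : β ⊕ Unit, (Sum.elim a 0 b)! = ∏ k, (a k)! := by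
    simp [Fintype.prod_sum_type]
  calc _ ≤ Fintype.card {g : {i // x i = true} → β ⊕ Unit //
          ∀ b, #{i | g i = b} = Sum.elim a 0 b} * ∏ b, (Sum.elim a 0 b)! := by
        rw [hprod]; exact Nat.mul_le_mul_right _ (Fintype.card_le_of_injective _ hinj)
    _ ≤ _ := by
        rw [← Fintype.card_subtype]; exact card_fun_fiber_card_eq_mul_prod_factorial_le _

end FiberCount

section Pairing

variable {α β : Type*} [Fintype α]

theorem card_fst_eq_add (p : α → Bool × Bool) (x : Bool) :
    #{i | (p i).1 = x} = #{i | p i = (x, true)} + #{i | p i = (x, false)} := by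
  rw [← card_filter_add_card_filter_not (s := {i | (p i).1 = x}) fun i => (p i).2]
  simp [filter_filter, Prod.ext_iff]

theorem card_snd_eq_add (p : α → Bool × Bool) (y : Bool) :
    #{i | (p i).2 = y} = #{i | p i = (true, y)} + #{i | p i = (false, y)} := by
  rw [← card_filter_add_card_filter_not (s := {i | (p i).2 = y}) fun i => (p i).1]
  simp [filter_filter, Prod.ext_iff, and_comm]

theorem card_isLeft_of_card_isRight {u : α → β ⊕ Unit} {m a₀ : ℕ} (hα : Fintype.card α = m + a₀)
    (hu : #{i | (u i).isRight} = m) : #{i | (u i).isLeft} = a₀ := by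
  have h := card_filter_add_card_filter_not (s := (univ : Finset α)) fun i => (u i).isLeft
  simp only [Bool.not_eq_true, Sum.isLeft_eq_false, hu, Finset.card_univ, hα] at h
  omega

def pairingPattern (lt : (α → β ⊕ Unit) × (α → β ⊕ Unit)) : α → Bool × Bool :=
  fun i => ((lt.1 i).isLeft, (lt.2 i).isLeft)

def pairingCellSize (a₀ m r : ℕ) : Bool × Bool → ℕ
  | (true, true) => r
  | (true, false) => a₀ - r
  | (false, true) => a₀ - r
  | (false, false) => m - (a₀ - r)

variable [DecidableEq β]

abbrev IsPairing (a : β → ℕ) (m r : ℕ) (lt : (α → β ⊕ Unit) × (α → β ⊕ Unit)) : Prop :=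
  (∀ k, #{i | lt.1 i = Sum.inl k} = a k ∧ #{i | lt.2 i = Sum.inl k} = a k) ∧
    #{i | (lt.1 i).isRight} = m ∧ #{i | (lt.2 i).isRight} = m ∧
    #{i | (lt.1 i).isLeft ∧ (lt.2 i).isLeft} = r

theorem card_pairingPattern_eq {a : β → ℕ} {m a₀ r : ℕ} (hα : Fintype.card α = m + a₀)
    {lt : (α → β ⊕ Unit) × (α → β ⊕ Unit)} (h : IsPairing a m r lt) (bb : Bool × Bool) :
    #{i | pairingPattern lt i = bb} = pairingCellSize a₀ m r bb := by
  obtain ⟨-, hm₁, hm₂, hr⟩ := h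
  have hTT : #{i | pairingPattern lt i = (true, true)} = r := by
    simpa [pairingPattern, Prod.ext_iff] using hr
  have hT₁ := card_fst_eq_add (pairingPattern lt) true
  have hF₁ := card_fst_eq_add (pairingPattern lt) false
  have hT₂ := card_snd_eq_add (pairingPattern lt) true
  have hF₂ := card_snd_eq_add (pairingPattern lt) false
  have hL₁ : #{i | (pairingPattern lt i).1 = true} = a₀ := card_isLeft_of_card_isRight hα hm₁
  have hL₂ : #{i | (pairingPattern lt i).2 = true} = a₀ := card_isLeft_of_card_isRight hα hm₂
  have hR₁ : #{i | (pairingPattern lt i).1 = false} = m := by simpa [pairingPattern] using hm₁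
  have hR₂ : #{i | (pairingPattern lt i).2 = false} = m := by simpa [pairingPattern] using hm₂
  obtain ⟨_ | _, _ | _⟩ := bb <;> simp only [pairingCellSize] <;> omega

variable [DecidableEq α] [Fintype β]

theorem card_pairingPattern_fiber_mul_le (a : β → ℕ) (m r : ℕ) (p : α → Bool × Bool) :
    #{lt | IsPairing (α := α) a m r lt ∧ pairingPattern lt = p} * (∏ k, (a k)!) ^ 2 ≤
      (#{i | (p i).1})! * (#{i | (p i).2})! := by
  let components (lt : {lt // IsPairing (α := α) a m r lt ∧ pairingPattern lt = p}) :
      Labeling a (fun i => (p i).1) × Labeling a (fun i => (p i).2) :=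
    (⟨lt.1.1, fun k => (lt.2.1.1 k).1, fun i => congrArg Prod.fst (congrFun lt.2.2 i)⟩,
      ⟨lt.1.2, fun k => (lt.2.1.1 k).2, fun i => congrArg Prod.snd (congrFun lt.2.2 i)⟩)
  have hcomponents : Function.Injective components := fun lt lt' h =>
    Subtype.ext (Prod.ext (congrArg (·.1.1) h) (congrArg (·.2.1) h))
  calc _ ≤ Fintype.card (Labeling a (fun i => (p i).1)) *
        Fintype.card (Labeling a (fun i => (p i).2)) * (∏ k, (a k)!) ^ 2 := by
        rw [← Fintype.card_subtype, ← Fintype.card_prod]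
        gcongr
        exact Fintype.card_le_of_injective components hcomponents
    _ ≤ _ := by
        rw [sq, mul_mul_mul_comm]
        exact Nat.mul_le_mul (card_labeling_mul_prod_factorial_le a _)
          (card_labeling_mul_prod_factorial_le a _)

theorem card_isPairing_mul_le (a : β → ℕ) {m a₀ r : ℕ} (hα : Fintype.card α = m + a₀) :
    #{lt | IsPairing (α := α) a m r lt} * (∏ bb, (pairingCellSize a₀ m r bb)!) *
        (∏ k, (a k)!) ^ 2 ≤ a₀ ! ^ 2 * (m + a₀)! := by
  set S : Finset ((α → β ⊕ Unit) × (α → β ⊕ Unit)) := {lt | IsPairing a m r lt}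
  set P := S.image pairingPattern with hPdef
  have hP : #P * ∏ bb, (pairingCellSize a₀ m r bb)! ≤ (m + a₀)! := by
    rw [← hα]
    refine le_trans (Nat.mul_le_mul_right _ ?_) (card_fun_fiber_card_eq_mul_prod_factorial_le _)
    rw [Fintype.card_subtype]
    refine card_le_card fun p hp => ?_
    obtain ⟨lt, hlt, rfl⟩ := mem_image.1 hp
    simpa using card_pairingPattern_eq hα (mem_filter.1 hlt).2
  have hfiber : ∀ p ∈ P, #{lt ∈ S | pairingPattern lt = p} * (∏ k, (a k)!) ^ 2 ≤ a₀ ! ^ 2 := by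
    intro p hp
    obtain ⟨lt, hlt, rfl⟩ := mem_image.1 hp
    have hlt := (mem_filter.1 hlt).2
    have h1 : #{i | (pairingPattern lt i).1} = a₀ := card_isLeft_of_card_isRight hα hlt.2.1
    have h2 : #{i | (pairingPattern lt i).2} = a₀ := card_isLeft_of_card_isRight hα hlt.2.2.1
    have := card_pairingPattern_fiber_mul_le a m r (pairingPattern lt)
    rw [h1, h2, ← sq] at this
    simpa [S, filter_filter] using this
  calc #S * (∏ bb, (pairingCellSize a₀ m r bb)!) * (∏ k, (a k)!) ^ 2
      = (∑ p ∈ P, #{lt ∈ S | pairingPattern lt = p} * (∏ k, (a k)!) ^ 2) *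
          ∏ bb, (pairingCellSize a₀ m r bb)! := by
        rw [card_eq_sum_card_image pairingPattern S, ← hPdef, ← sum_mul]; ring
    _ ≤ (#P * a₀ ! ^ 2) * ∏ bb, (pairingCellSize a₀ m r bb)! := by
        gcongr
        simpa using sum_le_sum hfiber
    _ ≤ a₀ ! ^ 2 * (m + a₀)! := by
        rw [mul_right_comm, mul_comm (a₀ ! ^ 2)]; gcongr

end Pairing

theorem stmt_7_general (K : ℕ) (a : Fin K → ℕ) (a₀ m r : ℕ) :
    (Fintype.card {lt : (Fin (m + a₀) → Fin K ⊕ Unit) × (Fin (m + a₀) → Fin K ⊕ Unit) //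
        (∀ k : Fin K,
          (Finset.univ.filter (fun i => lt.1 i = Sum.inl k)).card = a k ∧
          (Finset.univ.filter (fun i => lt.2 i = Sum.inl k)).card = a k) ∧
        (Finset.univ.filter (fun i => (lt.1 i).isRight)).card = m ∧
        (Finset.univ.filter (fun i => (lt.2 i).isRight)).card = m ∧
        (Finset.univ.filter (fun i => (lt.1 i).isLeft ∧ (lt.2 i).isLeft)).card = r} : ℝ) ≤
      ((a₀.factorial : ℝ) / ∏ k, ((a k).factorial : ℝ)) ^ 2 *
        ((m + a₀).factorial : ℝ) /
          ((r.factorial : ℝ) * (a₀ - r).factorial * (a₀ - r).factorial *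
            (m - (a₀ - r)).factorial) := by
  have hcount := card_isPairing_mul_le a (m := m) (a₀ := a₀) (r := r) (Fintype.card_fin _)
  have hcells : ∏ bb, (pairingCellSize a₀ m r bb)! =
      r ! * (a₀ - r)! * (a₀ - r)! * (m - (a₀ - r))! := by
    simp only [Fintype.prod_prod_type, Fintype.prod_bool, pairingCellSize]
    ring
  rw [hcells, ← Fintype.card_subtype] at hcount
  rw [le_div_iff₀ (by positivity), div_pow, div_mul_eq_mul_div, le_div_iff₀ (by positivity)]
  exact_mod_cast hcount

/-- Counting bound underlying the diagram formula: among the terms of the Hermite diagram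
expansion — pairs of index sequences `(l, t)` of length `q = m + a₀`, each taking each A-type
value `k` exactly `a k` times and the B-type value exactly `m` times — the number with exactly
`r` positions pairing an A-type `l`-index with an A-type `t`-index is at most
`(a₀!/∏ₖ a[k]!)² (m+a₀)! / (r! ((a₀-r)!)² (m-a₀+r)!)`. -/
theorem stmt_7 (K : ℕ) (a : Fin K → ℕ) (a₀ m r : ℕ) (ha₀ : a₀ = ∑ k, a k)
    (hr₁ : a₀ - m ≤ r) (hr₂ : r ≤ a₀) :
    (Fintype.card {lt : (Fin (m + a₀) → Fin K ⊕ Unit) × (Fin (m + a₀) → Fin K ⊕ Unit) //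
        (∀ k : Fin K,
          (Finset.univ.filter (fun i => lt.1 i = Sum.inl k)).card = a k ∧
          (Finset.univ.filter (fun i => lt.2 i = Sum.inl k)).card = a k) ∧
        (Finset.univ.filter (fun i => (lt.1 i).isRight)).card = m ∧
        (Finset.univ.filter (fun i => (lt.2 i).isRight)).card = m ∧
        (Finset.univ.filter (fun i => (lt.1 i).isLeft ∧ (lt.2 i).isLeft)).card = r} : ℝ) ≤
      ((a₀.factorial : ℝ) / ∏ k, ((a k).factorial : ℝ)) ^ 2 *
        ((m + a₀).factorial : ℝ) /
          ((r.factorial : ℝ) * (a₀ - r).factorial * (a₀ - r).factorial *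
            (m - (a₀ - r)).factorial) :=
  stmt_7_general K a a₀ m r
end
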